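/- (Hellman–Raviv upper bound, binary case) Let Z be a random variable taking values in a finite set and Y a random variable taking values in {0,1}, on a common probability space, with η(z) = P(Y = 1 | Z = z) and Bayes error p(e) = E[min(η(Z), 1 − η(Z))]. Then p(e) ≤ (1/2)·H(Y | Z), where H denotes conditional Shannon entropy with base-2 logarithms. -/

import Mathlib

open scoped BigOperators
open Classical

noncomputable section

/-- Probability of an event under a probability mass function `p` on a finite sample space. -/
def pr {Ω : Type*} [Fintype Ω] (p : Ω → ℝ) (E : Ω → Prop) : ℝ :=
  ∑ ω, if E ω then p ω else 0

/-- Posterior probability of the positive class: `η(z) = P(Y = 1 ∣ Z = z)`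
(with `true` encoding class `1`). -/
def post {Ω A : Type*} [Fintype Ω] (p : Ω → ℝ) (Z : Ω → A) (Y : Ω → Bool) (z : A) : ℝ :=
  pr p (fun ω => Z ω = z ∧ Y ω = true) / pr p (fun ω => Z ω = z)

/-- The Bayes classification error `E[min(η(Z), 1 − η(Z))]`. -/
def bayesError {Ω A : Type*} [Fintype Ω] [Fintype A]
    (p : Ω → ℝ) (Z : Ω → A) (Y : Ω → Bool) : ℝ :=
  ∑ z : A, pr p (fun ω => Z ω = z) * min (post p Z Y z) (1 - post p Z Y z)
/-- Shannon entropy in bits (base-2 logarithm) of the distribution of `X` under `p`. -/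
def entropy2 {Ω A : Type*} [Fintype Ω] [Fintype A] (p : Ω → ℝ) (X : Ω → A) : ℝ :=
  ∑ a : A, Real.negMulLog (pr p (fun ω => X ω = a)) / Real.log 2

/-- Conditional Shannon entropy `H(X | Y)` in bits (base-2 logarithms). -/
def condEntropy2 {Ω A B : Type*} [Fintype Ω] [Fintype A] [Fintype B]
    (p : Ω → ℝ) (X : Ω → A) (Y : Ω → B) : ℝ :=
  entropy2 p (fun ω => (X ω, Y ω)) - entropy2 p Y

open Real Finset

/- Concavity of `binEntropy` on the chord from `(0, 0)` to `(1/2, log 2)`. -/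
lemma two_mul_log_two_mul_le_binEntropy {s : ℝ} (hs₀ : 0 ≤ s) (hs₁ : s ≤ 2⁻¹) :
    2 * log 2 * s ≤ binEntropy s := by
  have h := strictConcave_binEntropy.concaveOn.2
    (show (0 : ℝ) ∈ Set.Icc 0 1 by norm_num) (show (2 : ℝ)⁻¹ ∈ Set.Icc 0 1 by norm_num)
    (show 0 ≤ 1 - 2 * s by linarith) (show 0 ≤ 2 * s by linarith) (sub_add_cancel 1 (2 * s))
  simp only [smul_eq_mul, mul_zero, zero_add, binEntropy_zero, binEntropy_two_inv] at h
  rw [show 2 * s * 2⁻¹ = s by ring] at h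
  linarith

lemma min_le_half_mul_binEntropy_div_log_two {t : ℝ} (ht₀ : 0 ≤ t) (ht₁ : t ≤ 1) :
    min t (1 - t) ≤ 1 / 2 * (binEntropy t / log 2) := by
  suffices 2 * log 2 * min t (1 - t) ≤ binEntropy t by
    rw [mul_div_assoc', le_div_iff₀ (log_pos one_lt_two)]
    linarith
  rcases le_total t 2⁻¹ with ht | ht
  · rw [min_eq_left (by linarith)]
    exact two_mul_log_two_mul_le_binEntropy ht₀ ht
  · rw [min_eq_right (by linarith), ← binEntropy_one_sub]
    exact two_mul_log_two_mul_le_binEntropy (by linarith) (by linarith)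

/- The grouping property of entropy; the junk value `a / 0 = 0` makes it hold also when `a + c = 0`. -/
lemma negMulLog_add_negMulLog_sub_negMulLog_add (a c : ℝ) :
    negMulLog a + negMulLog c - negMulLog (a + c) = (a + c) * binEntropy (a / (a + c)) := by
  rcases eq_or_ne (a + c) 0 with hq | hq
  · obtain rfl : c = -a := by linarith
    simp [negMulLog, log_neg_eq_log]
  · have hc : c = (a + c) * (1 - a / (a + c)) := by field_simp; ring
    have ha : a = (a + c) * (a / (a + c)) := by field_simp
    generalize a + c = q at *
    generalize a / q = t at *
    subst ha hc
    rw [binEntropy_eq_negMulLog_add_negMulLog_one_sub, negMulLog_mul, negMulLog_mul]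
    ring

section Probability

variable {Ω A : Type*} [Fintype Ω] {p : Ω → ℝ}

lemma pr_nonneg (hp₀ : ∀ ω, 0 ≤ p ω) (E : Ω → Prop) : 0 ≤ pr p E :=
  sum_nonneg fun ω _ => by split_ifs <;> simp [hp₀ ω]

lemma pr_mono (hp₀ : ∀ ω, 0 ≤ p ω) {E F : Ω → Prop} (hEF : ∀ ω, E ω → F ω) :
    pr p E ≤ pr p F :=
  sum_le_sum fun ω _ => by split_ifs <;> grind

lemma pr_eq_pr_and_add_pr_and_not (E F : Ω → Prop) :
    pr p E = pr p (fun ω => E ω ∧ F ω) + pr p (fun ω => E ω ∧ ¬F ω) := by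
  simp only [pr, ← sum_add_distrib]
  refine sum_congr rfl fun ω _ => ?_
  by_cases hE : E ω <;> by_cases hF : F ω <;> simp [hE, hF]

lemma post_nonneg (hp₀ : ∀ ω, 0 ≤ p ω) (Z : Ω → A) (Y : Ω → Bool) (z : A) :
    0 ≤ post p Z Y z :=
  div_nonneg (pr_nonneg hp₀ _) (pr_nonneg hp₀ _)

lemma post_le_one (hp₀ : ∀ ω, 0 ≤ p ω) (Z : Ω → A) (Y : Ω → Bool) (z : A) :
    post p Z Y z ≤ 1 :=
  div_le_one_of_le₀ (pr_mono hp₀ fun _ => And.left) (pr_nonneg hp₀ _)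

lemma condEntropy2_eq_sum_pr_mul_binEntropy_post [Fintype A] (Y : Ω → Bool) (Z : Ω → A) :
    condEntropy2 p Y Z = ∑ z, pr p (fun ω => Z ω = z) * binEntropy (post p Z Y z) / log 2 := by
  simp only [condEntropy2, entropy2, Fintype.sum_prod_type, Fintype.sum_bool, ← sum_add_distrib,
    ← sum_sub_distrib, ← add_div, ← sub_div, Prod.mk.injEq]
  refine sum_congr rfl fun z _ => ?_
  rw [pr_eq_pr_and_add_pr_and_not (fun ω => Z ω = z) (fun ω => Y ω = true), post,
    pr_eq_pr_and_add_pr_and_not (fun ω => Z ω = z) (fun ω => Y ω = true),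
    ← negMulLog_add_negMulLog_sub_negMulLog_add]
  simp only [Bool.not_eq_true, and_comm]

end Probability

theorem hellman_raviv_upper_bound_binary_general
    {Ω A : Type*} [Fintype Ω] [Fintype A]
    (p : Ω → ℝ) (hp0 : ∀ ω, 0 ≤ p ω)
    (Z : Ω → A) (Y : Ω → Bool) :
    bayesError p Z Y ≤ (1 / 2) * condEntropy2 p Y Z := by
  rw [condEntropy2_eq_sum_pr_mul_binEntropy_post, bayesError, mul_sum]
  refine sum_le_sum fun z _ => ?_
  calc pr p (fun ω => Z ω = z) * min (post p Z Y z) (1 - post p Z Y z)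
      ≤ pr p (fun ω => Z ω = z) * (1 / 2 * (binEntropy (post p Z Y z) / log 2)) :=
        mul_le_mul_of_nonneg_left
          (min_le_half_mul_binEntropy_div_log_two (post_nonneg hp0 Z Y z) (post_le_one hp0 Z Y z))
          (pr_nonneg hp0 _)
    _ = 1 / 2 * (pr p (fun ω => Z ω = z) * binEntropy (post p Z Y z) / log 2) := by ring

/-- **Hellman–Raviv upper bound, binary case.** With
`p(e) = E[min(η(Z), 1 − η(Z))]` the Bayes error and entropies in bits,
`p(e) ≤ (1/2)·H(Y | Z)`. -/
theorem hellman_raviv_upper_bound_binary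
    {Ω A : Type*} [Fintype Ω] [Fintype A]
    (p : Ω → ℝ) (hp0 : ∀ ω, 0 ≤ p ω) (hp1 : ∑ ω, p ω = 1)
    (Z : Ω → A) (Y : Ω → Bool) :
    bayesError p Z Y ≤ (1 / 2) * condEntropy2 p Y Z :=
  hellman_raviv_upper_bound_binary_general p hp0 Z Y
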